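/- Let B and X be Gödel hoops (i.e. basic hoops satisfying x · x = x) and let (f, g) be a strong external action of B on X satisfying condition (B2) (equivalently, a strong external action in the variety of basic hoops). Then the associated hoop Y' = {(x, b) ∈ X × B | f_b(x) = x}, with operations (x, b) → (y, b') = (g_{b'→b}(x → y), b → b') and (x, b) · (y, b') = (f_{b·b'}(x · y), b · b'), is a Gödel hoop; in particular (x, b) · (x, b) = (x, b) for all (x, b) ∈ Y'. Consequently, in any split extension with strong section of basic hoops whose kernel X and cokernel B are Gödel hoops, the middle object is a Gödel hoop. -/

import Mathlib

/-!
In `Y'` the second coordinate of the basic identity is the basic identity of `B`. In the first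
coordinate the outermost action index has the form `c ⇨ (d ⇨ c) = 1`, so by (E2) that
coordinate is exactly the left-hand side of (B2). Idempotency of `Y'` holds coordinatewise.
For a split extension with strong section, every `a` factors as `s (p a) * (s (p a) ⇨ a)`,
a product of an element of the image of `s` and an element of the kernel, both idempotent.
-/

class Hoop (α : Type*) extends CommMonoid α, HImp α where
  himp_self : ∀ x : α, x ⇨ x = 1
  mul_himp_comm : ∀ x y : α, x * (x ⇨ y) = y * (y ⇨ x)
  mul_himp_assoc : ∀ x y z : α, (x * y) ⇨ z = x ⇨ (y ⇨ z)

/-- A basic hoop: a hoop satisfying `((x → y) → z) → (((y → x) → z) → z) = 1`. -/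
class BasicHoop (α : Type*) extends Hoop α where
  basic : ∀ x y z : α, ((x ⇨ y) ⇨ z) ⇨ (((y ⇨ x) ⇨ z) ⇨ z) = 1

/-- A Gödel hoop: a basic hoop satisfying the idempotency `x · x = x`. -/
class GodelHoop (α : Type*) extends BasicHoop α where
  idem : ∀ x : α, x * x = x

/-- The multiplication of the semidirect product of a strong external action. -/
def Amul {B X : Type*} [Hoop B] [Hoop X] (f : B → X → X) (q r : X × B) : X × B :=
  (f (q.2 * r.2) (q.1 * r.1), q.2 * r.2)

/-- The implication of the semidirect product of a strong external action. -/
def Aimp {B X : Type*} [Hoop B] [Hoop X] (g : B → X → X) (q r : X × B) : X × B :=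
  (g (r.2 ⇨ q.2) (q.1 ⇨ r.1), q.2 ⇨ r.2)

/-- Membership in `Y' = {(x,b) ∈ X × B | f_b(x) = x}`. -/
def memY {B X : Type*} [Hoop B] [Hoop X] (f : B → X → X) (q : X × B) : Prop :=
  f q.2 q.1 = q.1

namespace Hoop

variable {α : Type*} [Hoop α]

lemma himp_one_himp (c x : α) : c ⇨ (1 ⇨ x) = c ⇨ x := by
  rw [← mul_himp_assoc, mul_one]

lemma one_himp (x : α) : (1 : α) ⇨ x = x := by
  have h_one_himp : x * (x ⇨ 1) = 1 ⇨ x := by rw [mul_himp_comm, one_mul]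
  have h_le : ((1 : α) ⇨ x) ⇨ x = 1 := by
    have h := Hoop.himp_self (x * (x ⇨ 1))
    rw [mul_himp_assoc, h_one_himp, himp_one_himp, ← mul_himp_assoc, h_one_himp] at h
    exact h
  have h_ge : x ⇨ ((1 : α) ⇨ x) = 1 := by rw [himp_one_himp, Hoop.himp_self]
  simpa only [h_le, h_ge, mul_one] using mul_himp_comm ((1 : α) ⇨ x) x

lemma himp_one (x : α) : x ⇨ (1 : α) = 1 := by
  have h_mul : x * (x ⇨ 1) = x := by rw [mul_himp_comm, one_mul, one_himp]
  have h_idem : x ⇨ (x ⇨ 1) = x ⇨ 1 := by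
    have h := mul_himp_assoc x (x ⇨ 1) (x ⇨ 1)
    rwa [h_mul, Hoop.himp_self] at h
  calc x ⇨ (1 : α) = (x ⇨ 1) ⇨ (x ⇨ (x ⇨ 1)) := by
        rw [← mul_himp_assoc, mul_comm, mul_himp_assoc, Hoop.himp_self]
    _ = 1 := by rw [h_idem, Hoop.himp_self]

lemma himp_himp_self (x y : α) : x ⇨ (y ⇨ x) = 1 := by
  rw [← mul_himp_assoc, mul_comm, mul_himp_assoc, Hoop.himp_self, himp_one]

end Hoop

theorem Aimp_basic {B X : Type*} [BasicHoop B] [Hoop X] (g : B → X → X)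
    (E2g : ∀ x : X, g 1 x = x)
    (B2 : ∀ (b₁ b₂ b₃ : B) (x y z : X),
      g ((((b₂ ⇨ b₁) ⇨ b₃) ⇨ b₃) ⇨ ((b₁ ⇨ b₂) ⇨ b₃))
          (g (b₃ ⇨ (b₁ ⇨ b₂)) (g (b₂ ⇨ b₁) (x ⇨ y) ⇨ z) ⇨
            (g (b₃ ⇨ (b₂ ⇨ b₁)) (g (b₁ ⇨ b₂) (y ⇨ x) ⇨ z) ⇨ z)) = 1)
    (u v w : X × B) :
    Aimp g (Aimp g (Aimp g u v) w) (Aimp g (Aimp g (Aimp g v u) w) w) = ((1 : X), (1 : B)) := by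
  refine Prod.ext ?_ (BasicHoop.basic u.2 v.2 w.2)
  simp only [Aimp]
  rw [Hoop.himp_himp_self w.2 (v.2 ⇨ u.2), E2g]
  exact B2 u.2 v.2 w.2 u.1 v.1 w.1

theorem Amul_self_of_memY {B X : Type*} [Hoop B] [Hoop X] (f : B → X → X) {q : X × B}
    (hx : IsIdempotentElem q.1) (hb : IsIdempotentElem q.2) (hq : memY f q) :
    Amul f q q = q :=
  Prod.ext (by simp only [Amul, hx.eq, hb.eq]; exact hq) hb.eq

section StrongSection

variable {A B : Type*} [Hoop A] [Hoop B] {p : A → B} {s : B → A}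

theorem section_mul_himp_eq (hs_one : s 1 = 1) (hs_himp : ∀ b b' : B, s (b ⇨ b') = s b ⇨ s b')
    (hstrong : ∀ (a : A) (b : B), a ⇨ s b = s (p a) ⇨ s b) (a : A) :
    s (p a) * (s (p a) ⇨ a) = a := by
  rw [Hoop.mul_himp_comm, hstrong a (p a), ← hs_himp, Hoop.himp_self, hs_one, mul_one]

theorem mul_self_of_strong_section (hs_one : s 1 = 1)
    (hs_mul : ∀ b b' : B, s (b * b') = s b * s b')
    (hs_himp : ∀ b b' : B, s (b ⇨ b') = s b ⇨ s b')
    (hp_himp : ∀ a a' : A, p (a ⇨ a') = p a ⇨ p a') (hps : ∀ b : B, p (s b) = b)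
    (hstrong : ∀ (a : A) (b : B), a ⇨ s b = s (p a) ⇨ s b)
    (hker : ∀ a : A, p a = 1 → a * a = a) (hB : ∀ b : B, b * b = b) (a : A) :
    a * a = a := by
  set e := s (p a)
  have he : e * e = e := by rw [← hs_mul, hB]
  have hk : (e ⇨ a) * (e ⇨ a) = e ⇨ a :=
    hker _ (by rw [hp_himp, hps, Hoop.himp_self])
  have ha := section_mul_himp_eq hs_one hs_himp hstrong a
  calc a * a = (e * e) * ((e ⇨ a) * (e ⇨ a)) := by rw [mul_mul_mul_comm, ha]
    _ = a := by rw [he, hk, ha]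

end StrongSection

theorem stmt15_general {B X : Type*} [GodelHoop B] [GodelHoop X] (f g : B → X → X)
    (E2g : ∀ x : X, g 1 x = x)
    (B2 : ∀ (b₁ b₂ b₃ : B) (x y z : X),
      g ((((b₂ ⇨ b₁) ⇨ b₃) ⇨ b₃) ⇨ ((b₁ ⇨ b₂) ⇨ b₃))
          (g (b₃ ⇨ (b₁ ⇨ b₂)) (g (b₂ ⇨ b₁) (x ⇨ y) ⇨ z) ⇨
            (g (b₃ ⇨ (b₂ ⇨ b₁)) (g (b₁ ⇨ b₂) (y ⇨ x) ⇨ z) ⇨ z)) = 1) :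
    -- Y' satisfies the basic-hoop identity
    (∀ u v w : X × B, memY f u → memY f v → memY f w →
      Aimp g (Aimp g (Aimp g u v) w)
          (Aimp g (Aimp g (Aimp g v u) w) w) = ((1 : X), (1 : B))) ∧
    -- Y' is idempotent
    (∀ q : X × B, memY f q → Amul f q q = q) ∧
    -- the middle object of a split extension with strong section of basic hoops
    -- with Gödel kernel and cokernel is a Gödel hoop
    (∀ (A B' : Type) (_ : BasicHoop A) (_ : BasicHoop B')
        (p : A → B') (s : B' → A),
      p 1 = 1 → (∀ a a' : A, p (a * a') = p a * p a') →
      (∀ a a' : A, p (a ⇨ a') = p a ⇨ p a') →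
      s 1 = 1 → (∀ b b' : B', s (b * b') = s b * s b') →
      (∀ b b' : B', s (b ⇨ b') = s b ⇨ s b') →
      (∀ b : B', p (s b) = b) →
      (∀ (a : A) (b : B'), a ⇨ s b = s (p a) ⇨ s b) →
      (∀ a : A, p a = 1 → a * a = a) →
      (∀ b : B', b * b = b) →
      ∀ a : A, a * a = a) := by
  refine ⟨fun u v w _ _ _ => Aimp_basic g E2g B2 u v w,
    fun q hq => Amul_self_of_memY f (GodelHoop.idem q.1) (GodelHoop.idem q.2) hq, ?_⟩
  intro A B' _ _ p s _ _ hp_himp hs_one hs_mul hs_himp hps hstrong hker hB'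
  exact mul_self_of_strong_section hs_one hs_mul hs_himp hp_himp hps hstrong hker hB'

/-- For a strong external action `(f,g)` (satisfying (B2)) of a Gödel hoop `B` on a
Gödel hoop `X`, the semidirect product hoop `Y' = {(x,b) | f_b(x) = x}` is a Gödel
hoop: it satisfies the basic-hoop identity and the idempotency `(x,b)·(x,b) = (x,b)`.
Consequently, in any split extension with strong section of basic hoops whose kernel
and cokernel are Gödel hoops, the middle object is a Gödel hoop. -/
theorem stmt15 {B X : Type*} [GodelHoop B] [GodelHoop X] (f g : B → X → X)
    (E1f : ∀ b : B, f b 1 = 1) (E1g : ∀ b : B, g b 1 = 1)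
    (E2f : ∀ x : X, f 1 x = x) (E2g : ∀ x : X, g 1 x = x)
    (E3 : ∀ (b₁ b₂ : B) (x y : X),
      f (b₁ * b₂) (x * g b₁ (x ⇨ y)) = f (b₁ * b₂) (x * (x ⇨ y)))
    (E4 : ∀ (b₁ b₂ b₃ : B) (x y z : X),
      g (b₃ ⇨ (b₁ * b₂)) (f (b₁ * b₂) (x * y) ⇨ z)
        = g ((b₂ ⇨ b₃) ⇨ b₁) (x ⇨ g (b₃ ⇨ b₂) (y ⇨ z)))
    (B2 : ∀ (b₁ b₂ b₃ : B) (x y z : X),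
      g ((((b₂ ⇨ b₁) ⇨ b₃) ⇨ b₃) ⇨ ((b₁ ⇨ b₂) ⇨ b₃))
          (g (b₃ ⇨ (b₁ ⇨ b₂)) (g (b₂ ⇨ b₁) (x ⇨ y) ⇨ z) ⇨
            (g (b₃ ⇨ (b₂ ⇨ b₁)) (g (b₁ ⇨ b₂) (y ⇨ x) ⇨ z) ⇨ z)) = 1) :
    -- Y' satisfies the basic-hoop identity
    (∀ u v w : X × B, memY f u → memY f v → memY f w →
      Aimp g (Aimp g (Aimp g u v) w)
          (Aimp g (Aimp g (Aimp g v u) w) w) = ((1 : X), (1 : B))) ∧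
    -- Y' is idempotent
    (∀ q : X × B, memY f q → Amul f q q = q) ∧
    -- the middle object of a split extension with strong section of basic hoops
    -- with Gödel kernel and cokernel is a Gödel hoop
    (∀ (A B' : Type) (_ : BasicHoop A) (_ : BasicHoop B')
        (p : A → B') (s : B' → A),
      p 1 = 1 → (∀ a a' : A, p (a * a') = p a * p a') →
      (∀ a a' : A, p (a ⇨ a') = p a ⇨ p a') →
      s 1 = 1 → (∀ b b' : B', s (b * b') = s b * s b') →
      (∀ b b' : B', s (b ⇨ b') = s b ⇨ s b') →
      (∀ b : B', p (s b) = b) →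
      (∀ (a : A) (b : B'), a ⇨ s b = s (p a) ⇨ s b) →
      (∀ a : A, p a = 1 → a * a = a) →
      (∀ b : B', b * b = b) →
      ∀ a : A, a * a = a) :=
  stmt15_general f g E2g B2
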